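/- arXiv:2310.00369 — 6 statements merged into one kernel-verified Lean document; each statement's English description precedes it below -/
import Mathlib

section
/- Let α be a nonempty finite type, let q₁, q₂ : α → ℝ be strictly positive probability mass functions (q₁ x > 0, q₂ x > 0 for all x, ∑ₓ q₁ x = 1, ∑ₓ q₂ x = 1), and let λ₁, λ₂ > 0 with λ₁ + λ₂ = 1. Define Z = ∑ₓ (q₁ x)^λ₁ · (q₂ x)^λ₂ and p* x = (q₁ x)^λ₁ · (q₂ x)^λ₂ / Z. Then p* is a strictly positive probability mass function, and for every strictly positive probability mass function p : α → ℝ one has λ₁ · KL(p ‖ q₁) + λ₂ · KL(p ‖ q₂) ≥ λ₁ · KL(p* ‖ q₁) + λ₂ · KL(p* ‖ q₂); i.e., the weighted geometric mean p* minimizes the weighted sum of reverse KL divergences to the two teachers. -/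
/-- Kullback–Leibler divergence between two pmfs on a finite type. -/
noncomputable def KL {α : Type*} [Fintype α] (p q : α → ℝ) : ℝ :=
  ∑ x, p x * Real.log (p x / q x)

lemma KL_nonneg {α : Type*} [Fintype α] (p q : α → ℝ)
    (hp : ∀ x, 0 < p x) (hq : ∀ x, 0 < q x)
    (hps : ∑ x, p x = 1) (hqs : ∑ x, q x = 1) : 0 ≤ KL p q := by
  have h : ∑ x, p x * Real.log (q x / p x) ≤ 0 := by
    calc ∑ x, p x * Real.log (q x / p x) ≤ ∑ x, (q x - p x) := by
          apply Finset.sum_le_sum; intro x _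
          have h1 := Real.log_le_sub_one_of_pos (div_pos (hq x) (hp x))
          have h2 : p x * Real.log (q x / p x) ≤ p x * (q x / p x - 1) :=
            mul_le_mul_of_nonneg_left h1 (hp x).le
          have h3 : p x * (q x / p x - 1) = q x - p x := by
            rw [mul_sub, mul_div_cancel₀ _ (hp x).ne', mul_one]
          linarith
      _ = 0 := by rw [Finset.sum_sub_distrib, hqs, hps]; ring
  have heq : KL p q = -∑ x, p x * Real.log (q x / p x) := by
    unfold KL
    rw [← Finset.sum_neg_distrib]
    apply Finset.sum_congr rfl
    intro x _
    rw [Real.log_div (hp x).ne' (hq x).ne', Real.log_div (hq x).ne' (hp x).ne']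
    ring
  rw [heq]; linarith

/-- The normalized weighted geometric mean `p*` of two strictly positive pmfs is a
strictly positive pmf, and it minimizes the weighted sum of reverse KL divergences
`λ₁ · KL(p ‖ q₁) + λ₂ · KL(p ‖ q₂)` over strictly positive pmfs `p`. -/
theorem geometric_mean_minimizes_weighted_KL
    {α : Type*} [Fintype α] [Nonempty α]
    (q₁ q₂ : α → ℝ)
    (hq₁pos : ∀ x, 0 < q₁ x) (hq₂pos : ∀ x, 0 < q₂ x)
    (hq₁sum : ∑ x, q₁ x = 1) (hq₂sum : ∑ x, q₂ x = 1)
    (l₁ l₂ : ℝ) (hl₁ : 0 < l₁) (hl₂ : 0 < l₂) (hl : l₁ + l₂ = 1)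
    (Z : ℝ) (hZ : Z = ∑ x, (q₁ x) ^ l₁ * (q₂ x) ^ l₂)
    (pstar : α → ℝ) (hpstar : ∀ x, pstar x = (q₁ x) ^ l₁ * (q₂ x) ^ l₂ / Z) :
    (∀ x, 0 < pstar x) ∧ (∑ x, pstar x = 1) ∧
      (∀ p : α → ℝ, (∀ x, 0 < p x) → (∑ x, p x = 1) →
        l₁ * KL p q₁ + l₂ * KL p q₂ ≥ l₁ * KL pstar q₁ + l₂ * KL pstar q₂) := by
  have hZpos : 0 < Z := by
    rw [hZ]
    apply Finset.sum_pos
    · intro x _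
      exact mul_pos (Real.rpow_pos_of_pos (hq₁pos x) _) (Real.rpow_pos_of_pos (hq₂pos x) _)
    · exact Finset.univ_nonempty
  have hppos : ∀ x, 0 < pstar x := by
    intro x; rw [hpstar x]
    exact div_pos (mul_pos (Real.rpow_pos_of_pos (hq₁pos x) _)
      (Real.rpow_pos_of_pos (hq₂pos x) _)) hZpos
  have hpsum : ∑ x, pstar x = 1 := by
    simp_rw [hpstar, ← Finset.sum_div, ← hZ]
    exact div_self hZpos.ne'
  -- key identity
  have hlogpstar : ∀ x, Real.log (pstar x) =
      l₁ * Real.log (q₁ x) + l₂ * Real.log (q₂ x) - Real.log Z := by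
    intro x
    rw [hpstar x, Real.log_div (mul_pos (Real.rpow_pos_of_pos (hq₁pos x) _)
        (Real.rpow_pos_of_pos (hq₂pos x) _)).ne' hZpos.ne',
      Real.log_mul (Real.rpow_pos_of_pos (hq₁pos x) _).ne'
        (Real.rpow_pos_of_pos (hq₂pos x) _).ne',
      Real.log_rpow (hq₁pos x), Real.log_rpow (hq₂pos x)]
  have key : ∀ p : α → ℝ, (∀ x, 0 < p x) → (∑ x, p x = 1) →
      l₁ * KL p q₁ + l₂ * KL p q₂ = KL p pstar - Real.log Z := by
    intro p hp hps
    unfold KL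
    rw [Finset.mul_sum, Finset.mul_sum, ← Finset.sum_add_distrib]
    have : ∀ x ∈ Finset.univ, l₁ * (p x * Real.log (p x / q₁ x))
        + l₂ * (p x * Real.log (p x / q₂ x))
        = p x * Real.log (p x / pstar x) - p x * Real.log Z := by
      intro x _
      rw [Real.log_div (hp x).ne' (hq₁pos x).ne', Real.log_div (hp x).ne' (hq₂pos x).ne',
        Real.log_div (hp x).ne' (hppos x).ne', hlogpstar x]
      rw [show l₁ = 1 - l₂ from by linarith]; ring
    rw [Finset.sum_congr rfl this, Finset.sum_sub_distrib, ← Finset.sum_mul, hps, one_mul]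
  refine ⟨hppos, hpsum, fun p hp hps => ?_⟩
  rw [key p hp hps, key pstar hppos hpsum]
  have h0 : KL pstar pstar = 0 := by
    unfold KL
    apply Finset.sum_eq_zero
    intro x _
    rw [div_self (hppos x).ne', Real.log_one, mul_zero]
  rw [h0]
  have := KL_nonneg p pstar hp hppos hps hpsum
  linarith
end

section
/- Let α be a nonempty finite type, let q₁, q₂ : α → ℝ be strictly positive probability mass functions, and let λ₁, λ₂ > 0 with λ₁ + λ₂ = 1. With Z = ∑ₓ (q₁ x)^λ₁ · (q₂ x)^λ₂ and p* x = (q₁ x)^λ₁ · (q₂ x)^λ₂ / Z, the minimum value of the objective λ₁ · KL(p ‖ q₁) + λ₂ · KL(p ‖ q₂) over strictly positive probability mass functions p is attained at p = p* and equals −log Z. -/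
/-- The minimum of `λ₁ · KL(p ‖ q₁) + λ₂ · KL(p ‖ q₂)` over strictly positive pmfs `p`
is attained at the normalized weighted geometric mean `p*` and equals `−log Z`. -/
theorem min_value_of_weighted_KL_is_neg_log_Z
    {α : Type*} [Fintype α] [Nonempty α]
    (q₁ q₂ : α → ℝ)
    (hq₁pos : ∀ x, 0 < q₁ x) (hq₂pos : ∀ x, 0 < q₂ x)
    (hq₁sum : ∑ x, q₁ x = 1) (hq₂sum : ∑ x, q₂ x = 1)
    (l₁ l₂ : ℝ) (hl₁ : 0 < l₁) (hl₂ : 0 < l₂) (hl : l₁ + l₂ = 1)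
    (Z : ℝ) (hZ : Z = ∑ x, (q₁ x) ^ l₁ * (q₂ x) ^ l₂)
    (pstar : α → ℝ) (hpstar : ∀ x, pstar x = (q₁ x) ^ l₁ * (q₂ x) ^ l₂ / Z) :
    (∀ x, 0 < pstar x) ∧ (∑ x, pstar x = 1) ∧
      l₁ * KL pstar q₁ + l₂ * KL pstar q₂ = -Real.log Z ∧
      (∀ p : α → ℝ, (∀ x, 0 < p x) → (∑ x, p x = 1) →
        -Real.log Z ≤ l₁ * KL p q₁ + l₂ * KL p q₂) := by
  have hterm : ∀ x, 0 < (q₁ x) ^ l₁ * (q₂ x) ^ l₂ := fun x =>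
    mul_pos (Real.rpow_pos_of_pos (hq₁pos x) _) (Real.rpow_pos_of_pos (hq₂pos x) _)
  have hZpos : 0 < Z := by
    rw [hZ]
    exact Finset.sum_pos (fun x _ => hterm x) Finset.univ_nonempty
  have hpstarpos : ∀ x, 0 < pstar x := fun x => by
    rw [hpstar x]; exact div_pos (hterm x) hZpos
  have hpstarsum : ∑ x, pstar x = 1 := by
    simp only [hpstar]
    rw [← Finset.sum_div, ← hZ, div_self hZpos.ne']
  have hlogpstar : ∀ x, Real.log (pstar x) =
      l₁ * Real.log (q₁ x) + l₂ * Real.log (q₂ x) - Real.log Z := by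
    intro x
    rw [hpstar x, Real.log_div (hterm x).ne' hZpos.ne',
      Real.log_mul (Real.rpow_pos_of_pos (hq₁pos x) _).ne'
        (Real.rpow_pos_of_pos (hq₂pos x) _).ne',
      Real.log_rpow (hq₁pos x), Real.log_rpow (hq₂pos x)]
  -- key identity: l₁ KL p q₁ + l₂ KL p q₂ = KL p pstar - log Z
  have key : ∀ p : α → ℝ, (∀ x, 0 < p x) → (∑ x, p x = 1) →
      l₁ * KL p q₁ + l₂ * KL p q₂ = KL p pstar - Real.log Z := by
    intro p hp hps
    unfold KL
    rw [Finset.mul_sum, Finset.mul_sum, ← Finset.sum_add_distrib]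
    have : ∀ x ∈ Finset.univ, l₁ * (p x * Real.log (p x / q₁ x))
        + l₂ * (p x * Real.log (p x / q₂ x))
        = p x * Real.log (p x / pstar x) - p x * Real.log Z := by
      intro x _
      rw [Real.log_div (hp x).ne' (hq₁pos x).ne',
        Real.log_div (hp x).ne' (hq₂pos x).ne',
        Real.log_div (hp x).ne' (hpstarpos x).ne', hlogpstar x]
      linear_combination p x * Real.log (p x) * hl
    rw [Finset.sum_congr rfl this, Finset.sum_sub_distrib,
      ← Finset.sum_mul, hps, one_mul]
  have hatmin : l₁ * KL pstar q₁ + l₂ * KL pstar q₂ = -Real.log Z := by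
    rw [key pstar hpstarpos hpstarsum]
    have : KL pstar pstar = 0 := by
      unfold KL
      refine Finset.sum_eq_zero fun x _ => ?_
      rw [div_self (hpstarpos x).ne', Real.log_one, mul_zero]
    rw [this]; ring
  refine ⟨hpstarpos, hpstarsum, hatmin, fun p hp hps => ?_⟩
  rw [key p hp hps]
  have := KL_nonneg p pstar hp hpstarpos hps hpstarsum
  linarith
end

section
/- Let α be a nonempty finite type, let q₁, q₂ : α → ℝ be strictly positive probability mass functions, and let λ₁, λ₂ > 0 with λ₁ + λ₂ = 1. Then Z = ∑ₓ (q₁ x)^λ₁ · (q₂ x)^λ₂ satisfies 0 < Z ≤ 1, with Z = 1 if and only if q₁ = q₂. Consequently the optimal value −log Z of the weighted reverse KL objective λ₁ · KL(p ‖ q₁) + λ₂ · KL(p ‖ q₂) is nonnegative, and it is zero if and only if the two teacher distributions coincide. -/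
lemma young_strict {a b : ℝ} (ha : 0 < a) (hb : 0 < b) (hab : a ≠ b)
    {l₁ l₂ : ℝ} (hl₁ : 0 < l₁) (hl₂ : 0 < l₂) (hl : l₁ + l₂ = 1) :
    a ^ l₁ * b ^ l₂ < l₁ * a + l₂ * b := by
  have h := strictConcaveOn_log_Ioi.2 (Set.mem_Ioi.2 ha) (Set.mem_Ioi.2 hb) hab hl₁ hl₂ hl
  simp only [smul_eq_mul] at h
  have hpos : 0 < l₁ * a + l₂ * b := by positivity
  calc a ^ l₁ * b ^ l₂ = Real.exp (l₁ * Real.log a + l₂ * Real.log b) := by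
        rw [Real.exp_add, ← Real.log_rpow ha, ← Real.log_rpow hb, Real.exp_log (by positivity),
          Real.exp_log (by positivity)]
    _ < Real.exp (Real.log (l₁ * a + l₂ * b)) := Real.exp_lt_exp.2 h
    _ = l₁ * a + l₂ * b := Real.exp_log hpos

/-- The normalizing constant `Z = ∑ₓ (q₁ x)^λ₁ (q₂ x)^λ₂` satisfies `0 < Z ≤ 1`,
with `Z = 1` iff `q₁ = q₂`; hence the optimal value `−log Z` is nonnegative and
vanishes iff the two teacher distributions coincide. -/
theorem normalizer_le_one_iff_teachers_equal
    {α : Type*} [Fintype α] [Nonempty α]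
    (q₁ q₂ : α → ℝ)
    (hq₁pos : ∀ x, 0 < q₁ x) (hq₂pos : ∀ x, 0 < q₂ x)
    (hq₁sum : ∑ x, q₁ x = 1) (hq₂sum : ∑ x, q₂ x = 1)
    (l₁ l₂ : ℝ) (hl₁ : 0 < l₁) (hl₂ : 0 < l₂) (hl : l₁ + l₂ = 1)
    (Z : ℝ) (hZ : Z = ∑ x, (q₁ x) ^ l₁ * (q₂ x) ^ l₂) :
    0 < Z ∧ Z ≤ 1 ∧ (Z = 1 ↔ q₁ = q₂) ∧
      0 ≤ -Real.log Z ∧ (-Real.log Z = 0 ↔ q₁ = q₂) := by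
  have hterm : ∀ x, (q₁ x) ^ l₁ * (q₂ x) ^ l₂ ≤ l₁ * q₁ x + l₂ * q₂ x := fun x =>
    Real.geom_mean_le_arith_mean2_weighted hl₁.le hl₂.le (hq₁pos x).le (hq₂pos x).le hl
  have hZpos : 0 < Z := by
    rw [hZ]
    refine Finset.sum_pos (fun x _ => ?_) Finset.univ_nonempty
    have h1 := hq₁pos x; have h2 := hq₂pos x; positivity
  have hsum1 : ∑ x, (l₁ * q₁ x + l₂ * q₂ x) = 1 := by
    rw [Finset.sum_add_distrib, ← Finset.mul_sum, ← Finset.mul_sum, hq₁sum, hq₂sum]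
    simpa using hl
  have hZle : Z ≤ 1 := by
    rw [hZ, ← hsum1]
    exact Finset.sum_le_sum fun x _ => hterm x
  have hiff : Z = 1 ↔ q₁ = q₂ := by
    constructor
    · intro h1
      by_contra hne
      obtain ⟨x, hx⟩ := Function.ne_iff.1 hne
      have : Z < 1 := by
        rw [hZ, ← hsum1]
        exact Finset.sum_lt_sum (fun i _ => hterm i)
          ⟨x, Finset.mem_univ x, young_strict (hq₁pos x) (hq₂pos x) hx hl₁ hl₂ hl⟩
      linarith
    · intro h
      subst h
      rw [hZ]
      have : ∀ x, (q₁ x) ^ l₁ * (q₁ x) ^ l₂ = q₁ x := fun x => by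
        rw [← Real.rpow_add (hq₁pos x), hl, Real.rpow_one]
      simp only [this]; exact hq₁sum
  have hlog0 : 0 ≤ -Real.log Z := by
    simpa using Real.log_nonpos hZpos.le hZle
  refine ⟨hZpos, hZle, hiff, hlog0, ?_⟩
  rw [← hiff]
  constructor
  · intro h
    have hlz : Real.log Z = 0 := by linarith
    have := Real.exp_log hZpos
    rw [hlz] at this; simpa using this.symm
  · intro h; rw [h]; simp
end

section
/- Let α be a nonempty finite type, let q₁, q₂ : α → ℝ be strictly positive probability mass functions, and let λ₁, λ₂ > 0 with λ₁ + λ₂ = 1. With m = λ₁ q₁ + λ₂ q₂, the minimum value of λ₁ · KL(q₁ ‖ p) + λ₂ · KL(q₂ ‖ p) over strictly positive probability mass functions p equals λ₁ · KL(q₁ ‖ m) + λ₂ · KL(q₂ ‖ m); this value is nonnegative and equals zero if and only if q₁ = q₂. -/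
lemma gibbs {α : Type*} [Fintype α] (p q : α → ℝ)
    (hp : ∀ x, 0 < p x) (hq : ∀ x, 0 < q x)
    (hps : ∑ x, p x = 1) (hqs : ∑ x, q x = 1) :
    0 ≤ KL p q ∧ (KL p q = 0 ↔ p = q) := by
  set f : α → ℝ := fun x => p x * (Real.log (q x / p x) - (q x / p x - 1)) with hf
  have hsum : ∑ x, f x = -KL p q := by
    unfold KL
    have : ∀ x : α, f x = -(p x * Real.log (p x / q x)) - (q x - p x) := by
      intro x
      have hpx := hp x
      have hqx := hq x
      have h1 : Real.log (q x / p x) = - Real.log (p x / q x) := by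
        rw [← Real.log_inv]; congr 1; field_simp
      have h2 : p x * (q x / p x - 1) = q x - p x := by field_simp
      simp only [hf]
      rw [mul_sub, h1, h2]; ring
    rw [Finset.sum_congr rfl (fun x _ => this x), Finset.sum_sub_distrib,
      Finset.sum_sub_distrib, Finset.sum_neg_distrib, hps, hqs]
    ring
  have hfle : ∀ x : α, f x ≤ 0 := by
    intro x
    have := Real.log_le_sub_one_of_pos (div_pos (hq x) (hp x))
    have := (hp x).le
    simp only [hf]
    nlinarith
  have hKLnn : 0 ≤ KL p q := by
    have : ∑ x, f x ≤ 0 := Finset.sum_nonpos (fun x _ => hfle x)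
    linarith [hsum ▸ this]
  refine ⟨hKLnn, ?_, ?_⟩
  · intro h0
    have hz : ∑ x, f x = 0 := by rw [hsum, h0, neg_zero]
    have heach : ∀ x ∈ Finset.univ, f x = 0 :=
      (Finset.sum_eq_zero_iff_of_nonpos (fun x _ => hfle x)).mp hz
    funext x
    have hx' : p x * (Real.log (q x / p x) - (q x / p x - 1)) = 0 := heach x (Finset.mem_univ x)
    by_contra hne
    have hne' : q x / p x ≠ 1 := by
      intro h
      apply hne
      rw [div_eq_one_iff_eq (hp x).ne'] at h
      linarith
    have := Real.log_lt_sub_one_of_pos (div_pos (hq x) (hp x)) hne'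
    have hpx := hp x
    nlinarith
  · intro h; subst h
    unfold KL
    apply Finset.sum_eq_zero
    intro x _
    rw [div_self (hp x).ne', Real.log_one, mul_zero]

lemma decomp {α : Type*} [Fintype α]
    (q₁ q₂ : α → ℝ)
    (hq₁pos : ∀ x, 0 < q₁ x) (hq₂pos : ∀ x, 0 < q₂ x)
    (l₁ l₂ : ℝ) (hl₁ : 0 < l₁) (hl₂ : 0 < l₂)
    (m : α → ℝ) (hm : ∀ x, m x = l₁ * q₁ x + l₂ * q₂ x)
    (p : α → ℝ) (hp : ∀ x, 0 < p x) :
    l₁ * KL q₁ p + l₂ * KL q₂ p = l₁ * KL q₁ m + l₂ * KL q₂ m + KL m p := by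
  have hmpos : ∀ x, 0 < m x := fun x => by
    have := hq₁pos x; have := hq₂pos x
    rw [hm x]; positivity
  unfold KL
  rw [Finset.mul_sum, Finset.mul_sum, Finset.mul_sum, Finset.mul_sum,
    ← Finset.sum_add_distrib, ← Finset.sum_add_distrib, ← Finset.sum_add_distrib]
  apply Finset.sum_congr rfl
  intro x _
  have hmx := (hmpos x).ne'
  have hpx := (hp x).ne'
  have hq1x := (hq₁pos x).ne'
  have hq2x := (hq₂pos x).ne'
  have h1 : Real.log (q₁ x / p x) = Real.log (q₁ x / m x) + Real.log (m x / p x) := by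
    rw [← Real.log_mul (div_ne_zero hq1x hmx) (div_ne_zero hmx hpx)]
    congr 1
    field_simp
  have h2 : Real.log (q₂ x / p x) = Real.log (q₂ x / m x) + Real.log (m x / p x) := by
    rw [← Real.log_mul (div_ne_zero hq2x hmx) (div_ne_zero hmx hpx)]
    congr 1
    field_simp
  rw [h1, h2, hm x]
  ring

/-- With `m = λ₁ q₁ + λ₂ q₂`, the minimum of `λ₁ · KL(q₁ ‖ p) + λ₂ · KL(q₂ ‖ p)` over
strictly positive pmfs `p` equals `λ₁ · KL(q₁ ‖ m) + λ₂ · KL(q₂ ‖ m)`; this value is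
nonnegative and is zero iff `q₁ = q₂`. -/
theorem mixture_min_value_forward_KL
    {α : Type*} [Fintype α] [Nonempty α]
    (q₁ q₂ : α → ℝ)
    (hq₁pos : ∀ x, 0 < q₁ x) (hq₂pos : ∀ x, 0 < q₂ x)
    (hq₁sum : ∑ x, q₁ x = 1) (hq₂sum : ∑ x, q₂ x = 1)
    (l₁ l₂ : ℝ) (hl₁ : 0 < l₁) (hl₂ : 0 < l₂) (hl : l₁ + l₂ = 1)
    (m : α → ℝ) (hm : ∀ x, m x = l₁ * q₁ x + l₂ * q₂ x) :
    (∀ x, 0 < m x) ∧ (∑ x, m x = 1) ∧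
      (∀ p : α → ℝ, (∀ x, 0 < p x) → (∑ x, p x = 1) →
        l₁ * KL q₁ m + l₂ * KL q₂ m ≤ l₁ * KL q₁ p + l₂ * KL q₂ p) ∧
      0 ≤ l₁ * KL q₁ m + l₂ * KL q₂ m ∧
      (l₁ * KL q₁ m + l₂ * KL q₂ m = 0 ↔ q₁ = q₂) := by
  have hmpos : ∀ x, 0 < m x := fun x => by
    have := hq₁pos x; have := hq₂pos x; rw [hm x]; positivity
  have hmsum : ∑ x, m x = 1 := by
    simp only [hm]
    rw [Finset.sum_add_distrib, ← Finset.mul_sum, ← Finset.mul_sum, hq₁sum, hq₂sum]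
    simpa using hl
  have g1 := gibbs q₁ m hq₁pos hmpos hq₁sum hmsum
  have g2 := gibbs q₂ m hq₂pos hmpos hq₂sum hmsum
  have hnn : 0 ≤ l₁ * KL q₁ m + l₂ * KL q₂ m := by
    have := mul_nonneg hl₁.le g1.1
    have := mul_nonneg hl₂.le g2.1
    linarith
  refine ⟨hmpos, hmsum, ?_, hnn, ?_, ?_⟩
  · intro p hppos hpsum
    rw [decomp q₁ q₂ hq₁pos hq₂pos l₁ l₂ hl₁ hl₂ m hm p hppos]
    have := (gibbs m p hmpos hppos hmsum hpsum).1
    linarith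
  · intro h0
    have h1 : KL q₁ m = 0 := by nlinarith [g1.1, g2.1]
    have h2 : KL q₂ m = 0 := by nlinarith [g1.1, g2.1]
    rw [g1.2.mp h1, g2.2.mp h2]
  · intro h
    subst h
    have hmq : m = q₁ := by
      funext x; rw [hm x, ← add_mul, hl, one_mul]
    have : KL q₁ m = 0 := g1.2.mpr hmq.symm
    rw [this]; ring
end

section
/- Let α be a nonempty finite type and let p*, q₁, q₂, p : α → ℝ be strictly positive probability mass functions with p* the minimizer characterized by λ₁ · KL(p* ‖ q₁) + λ₂ · KL(p* ‖ q₂) ≤ λ₁ · KL(p ‖ q₁) + λ₂ · KL(p ‖ q₂) for all strictly positive probability mass functions p, where λ₁, λ₂ > 0 and λ₁ + λ₂ = 1. Then the minimizer is unique: if p is any strictly positive probability mass function with λ₁ · KL(p ‖ q₁) + λ₂ · KL(p ‖ q₂) = λ₁ · KL(p* ‖ q₁) + λ₂ · KL(p* ‖ q₂), then p x = (q₁ x)^λ₁ · (q₂ x)^λ₂ / Z for all x, where Z = ∑ₓ (q₁ x)^λ₁ · (q₂ x)^λ₂. -/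
section

open Real Finset InformationTheory

variable {α : Type*} [Fintype α]

theorem KL_self (p : α → ℝ) : KL p p = 0 := by
  refine sum_eq_zero fun x _ => ?_
  rcases eq_or_ne (p x) 0 with hx | hx
  · simp [hx]
  · simp [div_self hx]

theorem sum_mul_klFun_div_eq_KL {p q : α → ℝ} (hq : ∀ x, q x ≠ 0)
    (hsum : ∑ x, p x = ∑ x, q x) : ∑ x, q x * klFun (p x / q x) = KL p q := by
  have hterm : ∀ x, q x * klFun (p x / q x) = p x * log (p x / q x) + (q x - p x) := by
    intro x
    have := hq x
    rw [klFun_apply]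
    field_simp
    ring
  simp only [hterm, sum_add_distrib, sum_sub_distrib, hsum, sub_self, add_zero, KL]

theorem eq_of_KL_nonpos {p q : α → ℝ} (hp : ∀ x, 0 ≤ p x) (hq : ∀ x, 0 < q x)
    (hsum : ∑ x, p x = ∑ x, q x) (h : KL p q ≤ 0) : p = q := by
  have hnonneg : ∀ x ∈ univ, 0 ≤ q x * klFun (p x / q x) :=
    fun x _ => mul_nonneg (hq x).le (klFun_nonneg (div_nonneg (hp x) (hq x).le))
  have hzero : ∑ x, q x * klFun (p x / q x) = 0 :=
    le_antisymm (sum_mul_klFun_div_eq_KL (fun x => (hq x).ne') hsum ▸ h) (sum_nonneg hnonneg)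
  funext x
  have hx := (sum_eq_zero_iff_of_nonneg hnonneg).mp hzero x (mem_univ x)
  rw [mul_eq_zero, or_iff_right (hq x).ne',
    klFun_eq_zero_iff (div_nonneg (hp x) (hq x).le), div_eq_one_iff_eq (hq x).ne'] at hx
  exact hx

noncomputable def geomMixture (l₁ l₂ : ℝ) (q₁ q₂ : α → ℝ) (x : α) : ℝ :=
  q₁ x ^ l₁ * q₂ x ^ l₂ / ∑ y, q₁ y ^ l₁ * q₂ y ^ l₂

section geomMixture

variable [Nonempty α] {q₁ q₂ : α → ℝ} {l₁ l₂ : ℝ} (hq₁ : ∀ x, 0 < q₁ x) (hq₂ : ∀ x, 0 < q₂ x)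
include hq₁ hq₂

theorem sum_rpow_mul_rpow_pos : 0 < ∑ y, q₁ y ^ l₁ * q₂ y ^ l₂ :=
  sum_pos (fun y _ => by have := hq₁ y; have := hq₂ y; positivity) univ_nonempty

theorem geomMixture_pos (x : α) : 0 < geomMixture l₁ l₂ q₁ q₂ x :=
  div_pos (mul_pos (rpow_pos_of_pos (hq₁ x) l₁) (rpow_pos_of_pos (hq₂ x) l₂))
    (sum_rpow_mul_rpow_pos hq₁ hq₂)

theorem sum_geomMixture : ∑ x, geomMixture l₁ l₂ q₁ q₂ x = 1 := by
  simp only [geomMixture, ← sum_div]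
  exact div_self (sum_rpow_mul_rpow_pos hq₁ hq₂).ne'

theorem log_geomMixture (x : α) :
    log (geomMixture l₁ l₂ q₁ q₂ x) =
      l₁ * log (q₁ x) + l₂ * log (q₂ x) - log (∑ y, q₁ y ^ l₁ * q₂ y ^ l₂) := by
  have h₁ : 0 < q₁ x ^ l₁ := rpow_pos_of_pos (hq₁ x) l₁
  have h₂ : 0 < q₂ x ^ l₂ := rpow_pos_of_pos (hq₂ x) l₂
  rw [geomMixture, log_div (mul_pos h₁ h₂).ne' (sum_rpow_mul_rpow_pos hq₁ hq₂).ne',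
    log_mul h₁.ne' h₂.ne', log_rpow (hq₁ x), log_rpow (hq₂ x)]

theorem KL_geomMixture (hl : l₁ + l₂ = 1) {r : α → ℝ} (hr : ∑ x, r x = 1) :
    KL r (geomMixture l₁ l₂ q₁ q₂) =
      l₁ * KL r q₁ + l₂ * KL r q₂ + log (∑ y, q₁ y ^ l₁ * q₂ y ^ l₂) := by
  have hterm : ∀ x, r x * log (r x / geomMixture l₁ l₂ q₁ q₂ x) =
      l₁ * (r x * log (r x / q₁ x)) + l₂ * (r x * log (r x / q₂ x)) +
        r x * log (∑ y, q₁ y ^ l₁ * q₂ y ^ l₂) := by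
    intro x
    rcases eq_or_ne (r x) 0 with hx | hx
    · simp [hx]
    rw [log_div hx (geomMixture_pos hq₁ hq₂ x).ne', log_geomMixture hq₁ hq₂,
      log_div hx (hq₁ x).ne', log_div hx (hq₂ x).ne']
    linear_combination (-r x * log (r x)) * hl
  simp only [KL, hterm, sum_add_distrib, ← mul_sum, ← sum_mul, hr, one_mul]

end geomMixture

end

theorem weighted_KL_minimizer_unique_general
    {α : Type*} [Fintype α] [Nonempty α]
    (pstar q₁ q₂ p : α → ℝ)
    (hq₁pos : ∀ x, 0 < q₁ x) (hq₂pos : ∀ x, 0 < q₂ x)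
    (hppos : ∀ x, 0 < p x) (hpsum : ∑ x, p x = 1)
    (l₁ l₂ : ℝ) (hl : l₁ + l₂ = 1)
    (hmin : ∀ r : α → ℝ, (∀ x, 0 < r x) → (∑ x, r x = 1) →
      l₁ * KL pstar q₁ + l₂ * KL pstar q₂ ≤ l₁ * KL r q₁ + l₂ * KL r q₂)
    (heq : l₁ * KL p q₁ + l₂ * KL p q₂ = l₁ * KL pstar q₁ + l₂ * KL pstar q₂) :
    ∀ x, p x = (q₁ x) ^ l₁ * (q₂ x) ^ l₂ / (∑ y, (q₁ y) ^ l₁ * (q₂ y) ^ l₂) := by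
  set g := geomMixture l₁ l₂ q₁ q₂
  have hg_pos : ∀ x, 0 < g x := geomMixture_pos hq₁pos hq₂pos
  have hg_sum : ∑ x, g x = 1 := sum_geomMixture hq₁pos hq₂pos
  have hg_value := KL_geomMixture hq₁pos hq₂pos hl hg_sum
  have hp_value := KL_geomMixture hq₁pos hq₂pos hl hpsum
  rw [KL_self] at hg_value
  have hp_KL : KL p g ≤ 0 := by linarith [hmin g hg_pos hg_sum]
  exact congrFun (eq_of_KL_nonpos (fun x => (hppos x).le) hg_pos (hpsum.trans hg_sum.symm) hp_KL)

/-- Uniqueness of the minimizer: any strictly positive pmf achieving the minimal value of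
`λ₁ · KL(· ‖ q₁) + λ₂ · KL(· ‖ q₂)` must equal the normalized weighted geometric mean. -/
theorem weighted_KL_minimizer_unique
    {α : Type*} [Fintype α] [Nonempty α]
    (pstar q₁ q₂ p : α → ℝ)
    (hpstarpos : ∀ x, 0 < pstar x) (hpstarsum : ∑ x, pstar x = 1)
    (hq₁pos : ∀ x, 0 < q₁ x) (hq₂pos : ∀ x, 0 < q₂ x)
    (hq₁sum : ∑ x, q₁ x = 1) (hq₂sum : ∑ x, q₂ x = 1)
    (hppos : ∀ x, 0 < p x) (hpsum : ∑ x, p x = 1)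
    (l₁ l₂ : ℝ) (hl₁ : 0 < l₁) (hl₂ : 0 < l₂) (hl : l₁ + l₂ = 1)
    (hmin : ∀ r : α → ℝ, (∀ x, 0 < r x) → (∑ x, r x = 1) →
      l₁ * KL pstar q₁ + l₂ * KL pstar q₂ ≤ l₁ * KL r q₁ + l₂ * KL r q₂)
    (heq : l₁ * KL p q₁ + l₂ * KL p q₂ = l₁ * KL pstar q₁ + l₂ * KL pstar q₂) :
    ∀ x, p x = (q₁ x) ^ l₁ * (q₂ x) ^ l₂ / (∑ y, (q₁ y) ^ l₁ * (q₂ y) ^ l₂) :=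
  weighted_KL_minimizer_unique_general pstar q₁ q₂ p hq₁pos hq₂pos hppos hpsum l₁ l₂ hl hmin heq
end

section
/- Let α be a nonempty finite type, let q₁, q₂ : α → ℝ be strictly positive probability mass functions, and let λ₁, λ₂ > 0 with λ₁ + λ₂ = 1. For every strictly positive probability mass function p : α → ℝ, the objective decomposes as λ₁ · KL(p ‖ q₁) + λ₂ · KL(p ‖ q₂) = KL(p ‖ p*) − log Z, where Z = ∑ₓ (q₁ x)^λ₁ · (q₂ x)^λ₂ and p* x = (q₁ x)^λ₁ · (q₂ x)^λ₂ / Z. -/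
/-- Decomposition of the weighted reverse-KL objective: for every strictly positive pmf `p`,
`λ₁ · KL(p ‖ q₁) + λ₂ · KL(p ‖ q₂) = KL(p ‖ p*) − log Z`, where `p*` is the normalized
weighted geometric mean and `Z` its normalizing constant. -/
theorem weighted_KL_decomposition
    {α : Type*} [Fintype α] [Nonempty α]
    (q₁ q₂ : α → ℝ)
    (hq₁pos : ∀ x, 0 < q₁ x) (hq₂pos : ∀ x, 0 < q₂ x)
    (hq₁sum : ∑ x, q₁ x = 1) (hq₂sum : ∑ x, q₂ x = 1)
    (l₁ l₂ : ℝ) (hl₁ : 0 < l₁) (hl₂ : 0 < l₂) (hl : l₁ + l₂ = 1)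
    (Z : ℝ) (hZ : Z = ∑ x, (q₁ x) ^ l₁ * (q₂ x) ^ l₂)
    (pstar : α → ℝ) (hpstar : ∀ x, pstar x = (q₁ x) ^ l₁ * (q₂ x) ^ l₂ / Z)
    (p : α → ℝ) (hppos : ∀ x, 0 < p x) (hpsum : ∑ x, p x = 1) :
    l₁ * KL p q₁ + l₂ * KL p q₂ = KL p pstar - Real.log Z := by
  have hZpos : 0 < Z := by
    rw [hZ]
    exact Finset.sum_pos (fun x _ => mul_pos (Real.rpow_pos_of_pos (hq₁pos x) _)
      (Real.rpow_pos_of_pos (hq₂pos x) _)) Finset.univ_nonempty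
  have key : ∀ x, p x * Real.log (p x / pstar x) =
      l₁ * (p x * Real.log (p x / q₁ x)) + l₂ * (p x * Real.log (p x / q₂ x))
        + p x * Real.log Z := by
    intro x
    have h1 := Real.rpow_pos_of_pos (hq₁pos x) l₁
    have h2 := Real.rpow_pos_of_pos (hq₂pos x) l₂
    rw [hpstar x, Real.log_div (ne_of_gt (hppos x)) (by positivity),
        Real.log_div (ne_of_gt (hppos x)) (ne_of_gt (hq₁pos x)),
        Real.log_div (ne_of_gt (hppos x)) (ne_of_gt (hq₂pos x)),
        Real.log_div (by positivity) (ne_of_gt hZpos),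
        Real.log_mul (ne_of_gt h1) (ne_of_gt h2),
        Real.log_rpow (hq₁pos x), Real.log_rpow (hq₂pos x)]
    linear_combination (-(p x * Real.log (p x))) * hl
  unfold KL
  have hsum : ∑ x, p x * Real.log (p x / pstar x) =
      l₁ * ∑ x, p x * Real.log (p x / q₁ x) + l₂ * ∑ x, p x * Real.log (p x / q₂ x)
        + (∑ x, p x) * Real.log Z := by
    simp_rw [key, Finset.sum_add_distrib, Finset.mul_sum, Finset.sum_mul]
  rw [hsum, hpsum]
  ring
end
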